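/- Let D ⊆ ℝ^n be a compact convex set, let T > 0 and L > 0, and let f : ℝ^n × ℝ → ℝ^n be Lipschitz continuous in (x,t) jointly on D × ℝ and T-periodic in its second argument. Define the averaged vector field f̄(y) = (1/T) ∫₀ᵀ f(y, τ) dτ. Then there exist constants C > 0 and ε₀ > 0 such that for every ε with 0 < ε ≤ ε₀ and every pair of differentiable curves x, y : [0, L/ε] → D satisfying x'(t) = ε · f(x(t), t) and y'(t) = ε · f̄(y(t)) for all t ∈ [0, L/ε] with the same initial value x(0) = y(0) = a ∈ D, one has ‖x(t) − y(t)‖ ≤ C · ε for all t ∈ [0, L/ε]. -/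

import Mathlib

/-!
Write `x - y = z`. Its derivative is `ε (f(x,t) - f(y,t))`, of size `εK‖z‖`, plus the fluctuation
`ε (f(y,t) - f̄(y))`. The fluctuation has mean zero over a period at frozen `y`, and `y` moves only
`O(εT)` during a period, so its integral over one period is `O(ε)`; summed over the `O(1/ε)`
periods in `[0, L/ε]` its primitive stays `O(1)`. Grönwall's inequality applied to `z` minus
`ε` times that primitive, with rate `εK` over time `L/ε`, gives `‖z‖ ≤ C ε` with `C ∝ exp(KL)`.
-/

open Set MeasureTheory intervalIntegral Real Topology
open scoped NNReal

section Integrals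

variable {F : Type*} [NormedAddCommGroup F] [NormedSpace ℝ F]

lemma norm_integral_le_of_norm_integral_period_le {φ : ℝ → F} {A B T b : ℝ} (hT : 0 < T)
    (hA : 0 ≤ A) (hφ : ContinuousOn φ (Icc 0 b)) (hB : ∀ s ∈ Icc 0 b, ‖φ s‖ ≤ B)
    (hperiod : ∀ r, 0 ≤ r → r + T ≤ b → ‖∫ s in r..r + T, φ s‖ ≤ A * T) :
    ∀ t ∈ Icc 0 b, ‖∫ s in (0:ℝ)..t, φ s‖ ≤ A * t + B * T := by
  have hint : ∀ r ∈ Icc 0 b, ∀ s ∈ Icc 0 b, IntervalIntegrable φ volume r s :=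
    fun r hr s hs => (hφ.mono (uIcc_subset_Icc hr hs)).intervalIntegrable
  intro t ht
  obtain ⟨N, hN⟩ := exists_nat_ge (t / T)
  rw [div_le_iff₀ hT] at hN
  induction N generalizing t with
  | zero =>
    obtain rfl : t = 0 := le_antisymm (by simpa using hN) ht.1
    simpa using mul_nonneg ((norm_nonneg _).trans (hB 0 ht)) hT.le
  | succ N ih =>
    by_cases htT : t ≤ T
    · have hbound := norm_integral_le_of_norm_le_const (C := B) (a := 0) (b := t) fun s hs => by
        rw [uIoc_of_le ht.1] at hs
        exact hB s ⟨hs.1.le, hs.2.trans ht.2⟩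
      rw [sub_zero, abs_of_nonneg ht.1] at hbound
      nlinarith [(norm_nonneg _).trans (hB t ht), mul_nonneg hA ht.1]
    · rw [not_le] at htT
      have ht' : t - T ∈ Icc 0 b := ⟨by linarith, by linarith [ht.2]⟩
      rw [← integral_add_adjacent_intervals (hint 0 (left_mem_Icc.2 (by linarith [ht.2])) _ ht')
        (hint _ ht' t ht)]
      have hlast := hperiod (t - T) ht'.1 (by linarith [ht.2])
      rw [sub_add_cancel] at hlast
      have hfirst := ih (t - T) ht' (by push_cast at hN; linarith)
      calc _ ≤ ‖∫ s in (0:ℝ)..t - T, φ s‖ + ‖∫ s in t - T..t, φ s‖ := norm_add_le _ _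
        _ ≤ A * (t - T) + B * T + A * T := add_le_add hfirst hlast
        _ = A * t + B * T := by ring

lemma gronwallBound_zero_mul (K δ x : ℝ) : gronwallBound 0 K (K * δ) x = δ * (exp (K * x) - 1) := by
  rcases eq_or_ne K 0 with rfl | hK
  · simp [gronwallBound_K0]
  · rw [gronwallBound_of_K_ne_0 hK, mul_div_cancel_left₀ δ hK]
    ring

lemma norm_le_mul_exp_of_norm_deriv_sub_le [CompleteSpace F] {z z' ψ : ℝ → F} {a b K δ : ℝ}
    (hK : 0 ≤ K) (hz : ContinuousOn z (Icc a b))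
    (hz' : ∀ t ∈ Ico a b, HasDerivWithinAt z (z' t) (Ici t) t)
    (hψ : ContinuousOn ψ (Icc a b)) (hbound : ∀ t ∈ Ico a b, ‖z' t - ψ t‖ ≤ K * ‖z t‖)
    (hψδ : ∀ t ∈ Icc a b, ‖∫ s in a..t, ψ s‖ ≤ δ) (ha : z a = 0) :
    ∀ t ∈ Icc a b, ‖z t‖ ≤ δ * exp (K * (t - a)) := by
  have hprim : ∀ t ∈ Ico a b, HasDerivWithinAt (fun t => ∫ s in a..t, ψ s) (ψ t) (Ici t) t := by
    intro t ht
    have hnhds : Icc a b ∈ 𝓝[>] t := Icc_mem_nhdsGT_of_mem ht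
    exact integral_hasDerivWithinAt_right
      ((hψ.mono (Icc_subset_Icc_right ht.2.le)).intervalIntegrable_of_Icc ht.1)
      ⟨Icc a b, hnhds, hψ.aestronglyMeasurable measurableSet_Icc⟩
      ((hψ t (Ico_subset_Icc_self ht)).mono_of_mem_nhdsWithin hnhds)
  have hprim_cont : ContinuousOn (fun t => ∫ s in a..t, ψ s) (Icc a b) := by
    rcases le_or_gt a b with hab | hab
    · rw [← uIcc_of_le hab] at hψ ⊢
      exact continuousOn_primitive_interval (hψ.integrableOn_compact isCompact_uIcc)
    · simp [Icc_eq_empty_of_lt hab]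
  set u := fun t => z t - ∫ s in a..t, ψ s
  have hzu : ∀ t ∈ Icc a b, ‖z t‖ ≤ ‖u t‖ + δ := fun t ht =>
    calc ‖z t‖ = ‖u t + ∫ s in a..t, ψ s‖ := by rw [sub_add_cancel]
      _ ≤ ‖u t‖ + δ := (norm_add_le _ _).trans (add_le_add le_rfl (hψδ t ht))
  have hu := norm_le_gronwallBound_of_norm_deriv_right_le (f := u) (δ := 0) (K := K) (ε := K * δ)
    (hz.sub hprim_cont) (fun t ht => (hz' t ht).sub (hprim t ht)) (by simp [u, ha])
    fun t ht =>
      calc ‖z' t - ψ t‖ ≤ K * ‖z t‖ := hbound t ht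
        _ ≤ K * (‖u t‖ + δ) := by gcongr; exact hzu t (Ico_subset_Icc_self ht)
        _ = K * ‖u t‖ + K * δ := by ring
  intro t ht
  calc ‖z t‖ ≤ δ * (exp (K * (t - a)) - 1) + δ :=
      (hzu t ht).trans (add_le_add ((hu t ht).trans_eq (gronwallBound_zero_mul _ _ _)) le_rfl)
    _ = δ * exp (K * (t - a)) := by ring

end Integrals

section Averaging

variable {E F : Type*} [NormedAddCommGroup F] {f : E × ℝ → F} {D : Set E} {K : ℝ≥0} {T M : ℝ}

lemma LipschitzOnWith.comp_prodMk_right [PseudoMetricSpace E] (hf : LipschitzOnWith K f (D ×ˢ univ))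
    (t : ℝ) : LipschitzOnWith K (fun c => f (c, t)) D := by
  have := hf.comp (LipschitzWith.prodMk_right t).lipschitzOnWith
    fun _ hc => mk_mem_prod hc (mem_univ t)
  rwa [mul_one] at this

lemma LipschitzOnWith.comp_prodMk_left [PseudoMetricSpace E] (hf : LipschitzOnWith K f (D ×ˢ univ))
    {c : E} (hc : c ∈ D) : LipschitzWith K (fun t => f (c, t)) := by
  have := hf.comp (LipschitzWith.prodMk_left c).lipschitzOnWith (s := univ)
    fun t _ => mk_mem_prod hc (mem_univ t)
  rwa [mul_one, lipschitzOnWith_univ] at this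

lemma exists_pos_norm_le_of_periodic [TopologicalSpace E] (hD : IsCompact D)
    (hf : ContinuousOn f (D ×ˢ univ)) (hT : 0 < T)
    (hper : ∀ c ∈ D, Function.Periodic (fun t => f (c, t)) T) :
    ∃ M > 0, ∀ c ∈ D, ∀ t, ‖f (c, t)‖ ≤ M := by
  obtain ⟨M, hM⟩ := (hD.prod isCompact_Icc).exists_bound_of_continuousOn
    (hf.mono (prod_mono_right (subset_univ (Icc 0 T))))
  refine ⟨max M 1, by positivity, fun c hc t => ?_⟩
  obtain ⟨s, hs, hst⟩ := (hper c hc).exists_mem_Ico₀ hT t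
  calc ‖f (c, t)‖ = ‖f (c, s)‖ := congrArg norm hst
    _ ≤ M := hM (c, s) ⟨hc, Ico_subset_Icc_self hs⟩
    _ ≤ max M 1 := le_max_left M 1

variable [NormedSpace ℝ F]

noncomputable def periodAverage (f : E × ℝ → F) (T : ℝ) (c : E) : F :=
  (1 / T) • ∫ τ in (0:ℝ)..T, f (c, τ)

noncomputable def fluctuation (f : E × ℝ → F) (T : ℝ) (p : E × ℝ) : F :=
  f p - periodAverage f T p.1

lemma norm_average_le {g : ℝ → F} (hT : 0 < T) (hg : ∀ τ, ‖g τ‖ ≤ M) :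
    ‖(1 / T) • ∫ τ in (0:ℝ)..T, g τ‖ ≤ M := by
  have hint := norm_integral_le_of_norm_le_const (a := 0) (b := T) fun τ _ => hg τ
  rw [sub_zero, abs_of_pos hT] at hint
  rw [norm_smul, Real.norm_of_nonneg (by positivity)]
  calc 1 / T * ‖∫ τ in (0:ℝ)..T, g τ‖ ≤ 1 / T * (M * T) := by gcongr
    _ = M := by field_simp

lemma lipschitzOnWith_periodAverage [PseudoMetricSpace E] (hT : 0 < T)
    (hf : ∀ t, LipschitzOnWith K (fun c => f (c, t)) D)
    (hint : ∀ c ∈ D, IntervalIntegrable (fun t => f (c, t)) volume 0 T) :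
    LipschitzOnWith K (periodAverage f T) D := by
  refine LipschitzOnWith.of_dist_le_mul fun c₁ h₁ c₂ h₂ => ?_
  rw [dist_eq_norm, periodAverage, periodAverage, ← smul_sub,
    ← integral_sub (hint c₁ h₁) (hint c₂ h₂)]
  exact norm_average_le hT fun t => by
    simpa only [dist_eq_norm] using (hf t).dist_le_mul c₁ h₁ c₂ h₂

lemma integral_fluctuation_eq_zero [CompleteSpace F] (hT : T ≠ 0) {c : E}
    (hper : Function.Periodic (fun t => f (c, t)) T) (hc : Continuous fun t => f (c, t))
    (r : ℝ) : ∫ s in r..r + T, fluctuation f T (c, s) = 0 := by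
  simp only [fluctuation]
  rw [integral_sub (hc.intervalIntegrable _ _) intervalIntegrable_const,
    intervalIntegral.integral_const, hper.intervalIntegral_add_eq r 0, zero_add,
    add_sub_cancel_left, periodAverage, smul_smul, mul_one_div_cancel hT, one_smul, sub_self]

lemma LipschitzOnWith.continuousOn_fluctuation_comp [PseudoMetricSpace E]
    (hf : LipschitzOnWith K f (D ×ˢ univ)) (hT : 0 < T) {y : ℝ → E} {s : Set ℝ}
    (hy : ContinuousOn y s) (hyD : MapsTo y s D) :
    ContinuousOn (fun t => fluctuation f T (y t, t)) s :=
  (hf.continuousOn.comp (hy.prodMk continuousOn_id) fun _ ht => ⟨hyD ht, trivial⟩).sub <|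
    (lipschitzOnWith_periodAverage hT hf.comp_prodMk_right fun _ hc =>
      (hf.comp_prodMk_left hc).continuous.intervalIntegrable _ _).continuousOn.comp hy hyD

lemma norm_integral_period_comp_le [PseudoMetricSpace E] {h : E × ℝ → F} {y : ℝ → E} {r v : ℝ}
    (hT : 0 ≤ T) (hv : 0 ≤ v)
    (hh : ∀ s, LipschitzOnWith K (fun c => h (c, s)) D)
    (hyD : MapsTo y (Icc r (r + T)) D) (hy : ∀ s ∈ Icc r (r + T), dist (y s) (y r) ≤ v * (s - r))
    (hint : IntervalIntegrable (fun s => h (y s, s)) volume r (r + T))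
    (hint₀ : IntervalIntegrable (fun s => h (y r, s)) volume r (r + T))
    (hmean : ∫ s in r..r + T, h (y r, s) = 0) :
    ‖∫ s in r..r + T, h (y s, s)‖ ≤ K * (v * T) * T := by
  rw [← sub_zero (∫ s in r..r + T, h (y s, s)), ← hmean, ← integral_sub hint hint₀]
  have hbound := norm_integral_le_of_norm_le_const (C := K * (v * T))
    (f := fun s => h (y s, s) - h (y r, s)) (a := r) (b := r + T) fun s hs => by
      rw [uIoc_of_le (by linarith)] at hs
      have hs' : s ∈ Icc r (r + T) := Ioc_subset_Icc_self hs
      calc ‖h (y s, s) - h (y r, s)‖ ≤ K * dist (y s) (y r) := by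
            rw [← dist_eq_norm]
            exact (hh s).dist_le_mul _ (hyD hs') _ (hyD (left_mem_Icc.2 (by linarith)))
        _ ≤ K * (v * (s - r)) := by gcongr; exact hy s hs'
        _ ≤ K * (v * T) := by gcongr; linarith [hs.2]
  rwa [add_sub_cancel_left, abs_of_nonneg hT] at hbound

lemma norm_integral_fluctuation_le [PseudoMetricSpace E] [CompleteSpace F] {y : ℝ → E} {v b : ℝ}
    (hT : 0 < T) (hv : 0 ≤ v)
    (hf : LipschitzOnWith K f (D ×ˢ univ))
    (hper : ∀ c ∈ D, Function.Periodic (fun t => f (c, t)) T)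
    (hM : ∀ c ∈ D, ∀ t, ‖f (c, t)‖ ≤ M) (hy : ContinuousOn y (Icc 0 b)) (hyD : MapsTo y (Icc 0 b) D)
    (hslow : ∀ r ∈ Icc 0 b, ∀ s ∈ Icc r b, dist (y s) (y r) ≤ v * (s - r)) :
    ∀ t ∈ Icc 0 b, ‖∫ s in (0:ℝ)..t, fluctuation f T (y s, s)‖ ≤ 2 * K * v * T * t + 2 * M * T := by
  have hφ := hf.continuousOn_fluctuation_comp hT hy hyD
  have havg := lipschitzOnWith_periodAverage hT hf.comp_prodMk_right fun _ hc =>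
    (hf.comp_prodMk_left hc).continuous.intervalIntegrable 0 T
  refine norm_integral_le_of_norm_integral_period_le hT (by positivity) hφ (fun s hs => ?_)
    fun r hr hrT => ?_
  · calc ‖fluctuation f T (y s, s)‖ ≤ ‖f (y s, s)‖ + ‖periodAverage f T (y s)‖ := norm_sub_le _ _
      _ ≤ M + M := add_le_add (hM _ (hyD hs) s) (norm_average_le hT (hM _ (hyD hs)))
      _ = 2 * M := by ring
  have hsub : Icc r (r + T) ⊆ Icc 0 b := Icc_subset_Icc hr hrT
  have hyr : y r ∈ D := hyD (hsub (left_mem_Icc.2 (by linarith)))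
  have hcont : Continuous fun s => fluctuation f T (y r, s) :=
    (hf.comp_prodMk_left hyr).continuous.sub (continuous_const (y := periodAverage f T (y r)))
  have hperiod := norm_integral_period_comp_le (h := fluctuation f T) (K := K + K) hT.le hv
    (fun s => (hf.comp_prodMk_right s).sub havg) (fun s hs => hyD (hsub hs))
    (fun s hs => hslow r (hsub (left_mem_Icc.2 (by linarith))) s ⟨hs.1, hs.2.trans hrT⟩)
    ((hφ.mono (hsub.trans' (uIcc_of_le (by linarith)).subset)).intervalIntegrable)
    (hcont.intervalIntegrable _ _)
    (integral_fluctuation_eq_zero hT.ne' (hper _ hyr) (hf.comp_prodMk_left hyr).continuous r)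
  calc _ ≤ ((K + K : ℝ≥0) : ℝ) * (v * T) * T := hperiod
    _ = 2 * K * v * T * T := by push_cast; ring

end Averaging

section ODE

variable {E : Type*} [NormedAddCommGroup E] [NormedSpace ℝ E] {f : E × ℝ → E} {D : Set E}
  {K : ℝ≥0} {T M ε b : ℝ} {x y : ℝ → E}

lemma dist_le_of_hasDerivAt_periodAverage (hT : 0 < T) (hε : 0 ≤ ε)
    (hM : ∀ c ∈ D, ∀ t, ‖f (c, t)‖ ≤ M) (hyD : MapsTo y (Icc 0 b) D)
    (hy : ∀ t ∈ Icc 0 b, HasDerivAt y (ε • periodAverage f T (y t)) t) :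
    ∀ r ∈ Icc 0 b, ∀ s ∈ Icc r b, dist (y s) (y r) ≤ ε * M * (s - r) := fun r hr => by
  have hsub : Icc r b ⊆ Icc 0 b := Icc_subset_Icc_left hr.1
  simpa only [dist_eq_norm] using norm_image_sub_le_of_norm_deriv_le_segment'
    (fun s hs => (hy s (hsub hs)).hasDerivWithinAt) fun s hs => by
      rw [norm_smul, Real.norm_of_nonneg hε]
      exact mul_le_mul_of_nonneg_left
        (norm_average_le hT (hM _ (hyD (hsub (Ico_subset_Icc_self hs))))) hε

lemma norm_sub_le_of_hasDerivAt_periodAverage [CompleteSpace E] (hT : 0 < T) (hε : 0 < ε)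
    (hf : LipschitzOnWith K f (D ×ˢ univ))
    (hper : ∀ c ∈ D, Function.Periodic (fun t => f (c, t)) T)
    (hM₀ : 0 ≤ M) (hM : ∀ c ∈ D, ∀ t, ‖f (c, t)‖ ≤ M)
    (hxD : MapsTo x (Icc 0 b) D) (hyD : MapsTo y (Icc 0 b) D)
    (hx : ∀ t ∈ Icc 0 b, HasDerivAt x (ε • f (x t, t)) t)
    (hy : ∀ t ∈ Icc 0 b, HasDerivAt y (ε • periodAverage f T (y t)) t) (h0 : x 0 = y 0) :
    ∀ t ∈ Icc 0 b,
      ‖x t - y t‖ ≤ ε * (2 * K * M * T * (ε * b) + 2 * M * T) * exp (K * (ε * b)) := by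
  have hyc : ContinuousOn y (Icc 0 b) := fun t ht => (hy t ht).continuousAt.continuousWithinAt
  have hslow := dist_le_of_hasDerivAt_periodAverage hT hε.le hM hyD hy
  have hderiv : ∀ t ∈ Ico 0 b, ‖(ε • f (x t, t) - ε • periodAverage f T (y t)) -
      ε • fluctuation f T (y t, t)‖ ≤ ε * K * ‖(x - y) t‖ := fun t ht => by
    have hxy := (hf.comp_prodMk_right t).norm_sub_le (hxD (Ico_subset_Icc_self ht))
      (hyD (Ico_subset_Icc_self ht))
    calc _ = ‖ε • (f (x t, t) - f (y t, t))‖ := by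
          congr 1; simp only [fluctuation, smul_sub]; abel
      _ ≤ ε * K * ‖(x - y) t‖ := by
          rw [norm_smul, Real.norm_of_nonneg hε.le, mul_assoc]; gcongr; exact hxy
  have hprim : ∀ t ∈ Icc 0 b, ‖∫ s in (0:ℝ)..t, ε • fluctuation f T (y s, s)‖ ≤
      ε * (2 * K * M * T * (ε * b) + 2 * M * T) := fun t ht => by
    rw [intervalIntegral.integral_smul, norm_smul, Real.norm_of_nonneg hε.le]
    have hεt : 2 * K * M * T * (ε * t) ≤ 2 * K * M * T * (ε * b) := by gcongr; exact ht.2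
    have hfluct := norm_integral_fluctuation_le hT (by positivity) hf hper hM hyc hyD hslow t ht
    gcongr
    linarith
  have hgronwall := norm_le_mul_exp_of_norm_deriv_sub_le (K := ε * K) (by positivity)
    (fun t ht => ((hx t ht).sub (hy t ht)).continuousAt.continuousWithinAt)
    (fun t ht => ((hx t (Ico_subset_Icc_self ht)).sub
      (hy t (Ico_subset_Icc_self ht))).hasDerivWithinAt)
    ((hf.continuousOn_fluctuation_comp hT hyc hyD).const_smul ε) hderiv hprim (by simp [h0])
  intro t ht
  have hb : 0 ≤ b := ht.1.trans ht.2
  refine (hgronwall t ht).trans (mul_le_mul_of_nonneg_left (exp_le_exp.2 ?_) (by positivity))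
  rw [sub_zero, mul_comm ε, mul_assoc]
  exact mul_le_mul_of_nonneg_left (mul_le_mul_of_nonneg_left ht.2 hε.le) K.coe_nonneg

end ODE

theorem averaging_theorem_general
    (n : ℕ) (D : Set (EuclideanSpace ℝ (Fin n)))
    (hDcompact : IsCompact D)
    (T L : ℝ) (hT : 0 < T) (hL : 0 < L)
    (f : EuclideanSpace ℝ (Fin n) × ℝ → EuclideanSpace ℝ (Fin n))
    (K : NNReal) (hLip : LipschitzOnWith K f (D ×ˢ (Set.univ : Set ℝ)))
    (hper : ∀ x : EuclideanSpace ℝ (Fin n), ∀ t : ℝ, f (x, t + T) = f (x, t))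
    (fbar : EuclideanSpace ℝ (Fin n) → EuclideanSpace ℝ (Fin n))
    (hfbar : ∀ y, fbar y = (1 / T) • ∫ τ in (0:ℝ)..T, f (y, τ)) :
    ∃ C > (0:ℝ), ∃ ε₀ > (0:ℝ),
      ∀ ε : ℝ, 0 < ε → ε ≤ ε₀ →
        ∀ (a : EuclideanSpace ℝ (Fin n)), a ∈ D →
          ∀ x y : ℝ → EuclideanSpace ℝ (Fin n),
            (∀ t ∈ Set.Icc (0:ℝ) (L / ε), x t ∈ D) →
            (∀ t ∈ Set.Icc (0:ℝ) (L / ε), y t ∈ D) →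
            (∀ t ∈ Set.Icc (0:ℝ) (L / ε), HasDerivAt x (ε • f (x t, t)) t) →
            (∀ t ∈ Set.Icc (0:ℝ) (L / ε), HasDerivAt y (ε • fbar (y t)) t) →
            x 0 = a → y 0 = a →
            ∀ t ∈ Set.Icc (0:ℝ) (L / ε), ‖x t - y t‖ ≤ C * ε := by
  obtain rfl : fbar = periodAverage f T := funext hfbar
  have hper' : ∀ c ∈ D, Function.Periodic (fun t => f (c, t)) T := fun c _ => hper c
  obtain ⟨M, hM, hfM⟩ := exists_pos_norm_le_of_periodic hDcompact hLip.continuousOn hT hper'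
  refine ⟨(2 * K * M * T * L + 2 * M * T) * exp (K * L), by positivity, 1, one_pos,
    fun ε hε _ a _ x y hxD hyD hx hy hx0 hy0 t ht => ?_⟩
  have hest := norm_sub_le_of_hasDerivAt_periodAverage hT hε hLip hper' hM.le hfM hxD hyD hx hy
    (hx0.trans hy0.symm) t ht
  rw [mul_div_cancel₀ L hε.ne'] at hest
  exact hest.trans_eq (by ring)

/-- **Averaging Theorem** (Lemma 2.1.8 of Sanders–Verhulst–Murdock).
For a vector field `f : ℝⁿ × ℝ → ℝⁿ` that is jointly Lipschitz on `D × ℝ`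
(with `D ⊆ ℝⁿ` compact and convex) and `T`-periodic in time, the solution of
the averaged system `ẏ = ε f̄(y)`, where `f̄(y) = (1/T) ∫₀ᵀ f(y,τ) dτ`,
approximates the solution of `ẋ = ε f(x,t)` with the same initial value to
order `O(ε)` on the timescale `1/ε`. -/
theorem averaging_theorem
    (n : ℕ) (D : Set (EuclideanSpace ℝ (Fin n)))
    (hDcompact : IsCompact D) (hDconvex : Convex ℝ D)
    (T L : ℝ) (hT : 0 < T) (hL : 0 < L)
    (f : EuclideanSpace ℝ (Fin n) × ℝ → EuclideanSpace ℝ (Fin n))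
    (K : NNReal) (hLip : LipschitzOnWith K f (D ×ˢ (Set.univ : Set ℝ)))
    (hper : ∀ x : EuclideanSpace ℝ (Fin n), ∀ t : ℝ, f (x, t + T) = f (x, t))
    (fbar : EuclideanSpace ℝ (Fin n) → EuclideanSpace ℝ (Fin n))
    (hfbar : ∀ y, fbar y = (1 / T) • ∫ τ in (0:ℝ)..T, f (y, τ)) :
    ∃ C > (0:ℝ), ∃ ε₀ > (0:ℝ),
      ∀ ε : ℝ, 0 < ε → ε ≤ ε₀ →
        ∀ (a : EuclideanSpace ℝ (Fin n)), a ∈ D →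
          ∀ x y : ℝ → EuclideanSpace ℝ (Fin n),
            (∀ t ∈ Set.Icc (0:ℝ) (L / ε), x t ∈ D) →
            (∀ t ∈ Set.Icc (0:ℝ) (L / ε), y t ∈ D) →
            (∀ t ∈ Set.Icc (0:ℝ) (L / ε), HasDerivAt x (ε • f (x t, t)) t) →
            (∀ t ∈ Set.Icc (0:ℝ) (L / ε), HasDerivAt y (ε • fbar (y t)) t) →
            x 0 = a → y 0 = a →
            ∀ t ∈ Set.Icc (0:ℝ) (L / ε), ‖x t - y t‖ ≤ C * ε :=
  averaging_theorem_general n D hDcompact T L hT hL f K hLip hper fbar hfbar
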